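/- arXiv:2509.11888 — 7 statements merged into one kernel-verified Lean document; each statement's English description precedes it below -/
import Mathlib

section
/- Let B be a ∗-algebra and M a B-bimodule. The assignments † ↦ ⋆_{M,†}, where ⋆_{M,†}(m) = (†(m))‾, and ⋆_M ↦ †_{⋆_M}, where †_{⋆_M}(m) = bb_M⁻¹( ⋆_M‾ (m̄) ), are mutually inverse bijections between †-structures on M and star-object structures on M in the bar category of B-bimodules. -/
open MulOpposite

noncomputable section

/-- The conjugate of a `B`-bimodule `M` (same carrier, conjugated actions). -/
def Conj (M : Type) : Type := M

/-- The canonical map `m ↦ m̄`. -/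
def Conj.mk {M : Type} (m : M) : Conj M := m

/-- The inverse of `Conj.mk`. -/
def Conj.unmk {M : Type} (m : Conj M) : M := m

instance {M : Type} [AddCommGroup M] : AddCommGroup (Conj M) :=
  inferInstanceAs (AddCommGroup M)

/-- `c • m̄ = (conj c • m)‾`. -/
instance {M : Type} [AddCommGroup M] [Module ℂ M] : Module ℂ (Conj M) :=
  Module.compHom M (starRingEnd ℂ)

/-- `b • m̄ = (m • b∗)‾`. -/
instance {B M : Type} [Ring B] [StarRing B] [AddCommGroup M] [Module Bᵐᵒᵖ M] :
    Module B (Conj M) :=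
  Module.compHom M ((starRingEquiv : B ≃+* Bᵐᵒᵖ) : B →+* Bᵐᵒᵖ)

/-- `m̄ • b = (b∗ • m)‾`. -/
instance {B M : Type} [Ring B] [StarRing B] [AddCommGroup M] [Module B M] :
    Module Bᵐᵒᵖ (Conj M) :=
  Module.compHom M (((starRingEquiv : B ≃+* Bᵐᵒᵖ).symm : Bᵐᵒᵖ ≃+* B) : Bᵐᵒᵖ →+* B)

/-- The conjugate `f̄(m̄) = (f m)‾` of a map. -/
def conjMap {M N : Type} (f : M → N) : Conj M → Conj N := f

/-- The natural map `bb_M : M → M̿`, `m ↦ m̿`. -/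
def conjBB {M : Type} (m : M) : Conj (Conj M) := Conj.mk (Conj.mk m)

/-- A `†`-structure on a `B`-bimodule `M`: an antilinear involution with
`†(bmc) = c∗ †(m) b∗`. -/
structure DaggerStructure (B M : Type) [Ring B] [Algebra ℂ B] [StarRing B]
    [AddCommGroup M] [Module ℂ M] [Module B M] [Module Bᵐᵒᵖ M] : Type where
  dag : M → M
  dag_add : ∀ x y, dag (x + y) = dag x + dag y
  dag_smul : ∀ (c : ℂ) (x : M), dag (c • x) = (starRingEnd ℂ c) • dag x
  dag_invol : ∀ x, dag (dag x) = x
  dag_left : ∀ (b : B) (x : M), dag (b • x) = op (star b) • dag x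
  dag_right : ∀ (b : B) (x : M), dag (op b • x) = star b • dag x

/-- A star object structure on a `B`-bimodule `M` in the bar category of `B`-bimodules:
a `B`-bimodule morphism `⋆_M : M → M̄` with `⋆̄_M ∘ ⋆_M = bb_M`. -/
structure StarObjStructure (B M : Type) [Ring B] [Algebra ℂ B] [StarRing B]
    [AddCommGroup M] [Module ℂ M] [Module B M] [Module Bᵐᵒᵖ M] : Type where
  so : M → Conj M
  so_add : ∀ x y, so (x + y) = so x + so y
  so_smul : ∀ (c : ℂ) (x : M), so (c • x) = c • so x
  so_left : ∀ (b : B) (x : M), so (b • x) = b • so x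
  so_right : ∀ (b : Bᵐᵒᵖ) (x : M), so (b • x) = b • so x
  so_bb : ∀ x, conjMap so (so x) = conjBB x

section

variable {B M : Type} [Ring B] [Algebra ℂ B] [StarRing B]
  [AddCommGroup M] [Module ℂ M] [Module B M] [Module Bᵐᵒᵖ M]

theorem DaggerStructure.ext {D D' : DaggerStructure B M} (h : D.dag = D'.dag) : D = D' := by
  cases D; cases D'; cases h; rfl

theorem StarObjStructure.ext {S S' : StarObjStructure B M} (h : S.so = S'.so) : S = S' := by
  cases S; cases S'; cases h; rfl

/-- The bimodule-map axioms of `⋆` are the twisted-linearity axioms of `†` read through the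
conjugate actions, and `⋆̄ ∘ ⋆ = bb` is `† ∘ † = id`. -/
def DaggerStructure.toStarObj (D : DaggerStructure B M) : StarObjStructure B M where
  so m := Conj.mk (D.dag m)
  so_add x y := congrArg Conj.mk (D.dag_add x y)
  so_smul c x := congrArg Conj.mk (D.dag_smul c x)
  so_left b x := congrArg Conj.mk (D.dag_left b x)
  so_right b x := congrArg Conj.mk (D.dag_right b.unop x)
  so_bb x := congrArg conjBB (D.dag_invol x)

def StarObjStructure.toDagger (S : StarObjStructure B M) : DaggerStructure B M where
  dag m := Conj.unmk (Conj.unmk (conjMap S.so (Conj.mk m)))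
  dag_add := S.so_add
  dag_smul := S.so_smul
  dag_invol := S.so_bb
  dag_left := S.so_left
  dag_right b := S.so_right (op b)

theorem DaggerStructure.toDagger_toStarObj (D : DaggerStructure B M) :
    D.toStarObj.toDagger = D :=
  DaggerStructure.ext rfl

theorem StarObjStructure.toStarObj_toDagger (S : StarObjStructure B M) :
    S.toDagger.toStarObj = S :=
  StarObjStructure.ext rfl

end

/-- The assignments `† ↦ ⋆_{M,†}` (with `⋆_{M,†}(m) = (†m)‾`) and
`⋆_M ↦ †_{⋆_M}` (with `†_{⋆_M}(m) = bb_M⁻¹(⋆̄_M(m̄))`) are mutually inverse bijections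
between `†`-structures and star object structures on `M`. -/
theorem statement2 (B M : Type) [Ring B] [Algebra ℂ B] [StarRing B]
    [AddCommGroup M] [Module ℂ M] [Module B M] [Module Bᵐᵒᵖ M] :
    ∃ (F : DaggerStructure B M → StarObjStructure B M)
      (G : StarObjStructure B M → DaggerStructure B M),
      (∀ D : DaggerStructure B M, (F D).so = fun m => Conj.mk (D.dag m)) ∧
      (∀ S : StarObjStructure B M,
        (G S).dag = fun m => Conj.unmk (Conj.unmk (conjMap S.so (Conj.mk m)))) ∧
      Function.LeftInverse G F ∧ Function.RightInverse G F :=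
  ⟨DaggerStructure.toStarObj, StarObjStructure.toDagger, fun _ => rfl, fun _ => rfl,
    DaggerStructure.toDagger_toStarObj, StarObjStructure.toStarObj_toDagger⟩

end
end

section
/- Let H be an Hermitian metric on a B-bimodule E and ∇ a left connection on E for a ∗-differential calculus (Ω¹, d). Then ∇ is compatible with H (in the Beggs–Majid sense) if and only if the connection √−1·∇ for the first order differential calculus (Ω¹, √−1·d) is Hermitian (in the Mesland–Rennie sense) with respect to the sesquilinear form ⟨⟨e,f⟩⟩ = H(f̄)(e), where Ω¹ carries the †-structure †(ω) = ω∗. -/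
open MulOpposite

noncomputable section

/-! ## Generic noncommutative differential geometry preliminaries

We encode a `B`-bimodule as a `ℂ`-module with a left `B`-action and a right `B`-action
(encoded as a left `Bᵐᵒᵖ`-action).  The balanced tensor product `M ⊗_B N` is encoded by
a type `T` together with a "balanced pairing" `tp` whose image spans `T`. -/

/-- Data realizing `T` as the balanced tensor product `M ⊗_B N` over the
(possibly noncommutative) `ℂ`-algebra `B`: a `ℂ`-bilinear pairing which is left
`B`-linear in the first variable, right `B`-linear in the second variable,
`B`-balanced in the middle, and whose image spans `T`. -/
structure BalPair (B : Type) [Ring B] [Algebra ℂ B]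
    (M N T : Type) [AddCommGroup M] [Module ℂ M] [Module B M] [Module Bᵐᵒᵖ M]
    [AddCommGroup N] [Module ℂ N] [Module B N] [Module Bᵐᵒᵖ N]
    [AddCommGroup T] [Module ℂ T] [Module B T] [Module Bᵐᵒᵖ T] : Type where
  tp : M →ₗ[ℂ] N →ₗ[ℂ] T
  tp_left : ∀ (b : B) (m : M) (n : N), tp (b • m) n = b • tp m n
  tp_right : ∀ (b : B) (m : M) (n : N), tp m (op b • n) = op b • tp m n
  tp_mid : ∀ (b : B) (m : M) (n : N), tp (op b • m) n = tp m (b • n)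
  tp_span : Submodule.span ℂ {t : T | ∃ m n, t = tp m n} = ⊤

/-- A first order differential calculus `(Ω¹, d)` over `B`:  `d : B → Ω¹` is a
derivation whose image generates `Ω¹` as a `B`-bimodule. -/
structure FODC (B : Type) [Ring B] [Algebra ℂ B]
    (Ω : Type) [AddCommGroup Ω] [Module ℂ Ω] [Module B Ω] [Module Bᵐᵒᵖ Ω] : Type where
  d : B →ₗ[ℂ] Ω
  leibniz : ∀ a b : B, d (a * b) = a • d b + op b • d a
  generates : Submodule.span ℂ {x : Ω | ∃ a b : B, x = a • d b} = ⊤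

section Connections

variable {B : Type} [Ring B] [Algebra ℂ B]
variable {Ω E TE T : Type}
  [AddCommGroup Ω] [Module ℂ Ω] [Module B Ω] [Module Bᵐᵒᵖ Ω]
  [AddCommGroup E] [Module ℂ E] [Module B E] [Module Bᵐᵒᵖ E]
  [AddCommGroup TE] [Module ℂ TE] [Module B TE] [Module Bᵐᵒᵖ TE]
  [AddCommGroup T] [Module ℂ T] [Module B T] [Module Bᵐᵒᵖ T]

/-- `∇ : E → Ω¹ ⊗_B E` is a left connection: `∇(be) = b∇e + db ⊗ e`. -/
def IsConnection (P : BalPair B Ω E TE) (d : B →ₗ[ℂ] Ω) (cn : E →ₗ[ℂ] TE) : Prop :=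
  ∀ (b : B) (e : E), cn (b • e) = b • cn e + P.tp (d b) e

/-- A `B`-bimodule map. -/
def IsBimoduleMap {M N : Type} [AddCommGroup M] [Module ℂ M] [Module B M] [Module Bᵐᵒᵖ M]
    [AddCommGroup N] [Module ℂ N] [Module B N] [Module Bᵐᵒᵖ N] (σ : M →ₗ[ℂ] N) : Prop :=
  (∀ (b : B) (t : M), σ (b • t) = b • σ t) ∧ ∀ (b : B) (t : M), σ (op b • t) = op b • σ t

/-- The right Leibniz rule for a bimodule connection `(∇, σ)`:
`∇(eb) = (∇e)b + σ(e ⊗ db)`. -/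
def IsRightConnection (Q : BalPair B E Ω TE)
    (d : B →ₗ[ℂ] Ω) (cn : E →ₗ[ℂ] TE) (σ : TE →ₗ[ℂ] TE) : Prop :=
  ∀ (b : B) (e : E), cn (op b • e) = op b • cn e + σ (Q.tp e (d b))

end Connections

section Star

variable (B : Type) [Ring B] [Algebra ℂ B] [StarRing B]
variable (Ω : Type) [AddCommGroup Ω] [Module ℂ Ω] [Module B Ω] [Module Bᵐᵒᵖ Ω]

/-- A `∗`-structure on the bimodule `Ω` over the `∗`-algebra `B`:
an antilinear involution with `(bωc)∗ = c∗ω∗b∗`. -/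
structure StarData : Type where
  st : Ω → Ω
  st_add : ∀ x y, st (x + y) = st x + st y
  st_smul : ∀ (c : ℂ) (x : Ω), st (c • x) = (starRingEnd ℂ c) • st x
  st_invol : ∀ x, st (st x) = x
  st_left : ∀ (b : B) (x : Ω), st (b • x) = op (star b) • st x
  st_right : ∀ (b : B) (x : Ω), st (op b • x) = star b • st x

end Star

section StarNotions

variable {B : Type} [Ring B] [Algebra ℂ B] [StarRing B]
variable {Ω E TE T : Type}
  [AddCommGroup Ω] [Module ℂ Ω] [Module B Ω] [Module Bᵐᵒᵖ Ω]
  [AddCommGroup E] [Module ℂ E] [Module B E] [Module Bᵐᵒᵖ E]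
  [AddCommGroup TE] [Module ℂ TE] [Module B TE] [Module Bᵐᵒᵖ TE]
  [AddCommGroup T] [Module ℂ T] [Module B T] [Module Bᵐᵒᵖ T]

/-- A metric `g = Σᵢ ωᵢ ⊗ ηᵢ` is real if `g = Σᵢ ηᵢ∗ ⊗ ωᵢ∗`
(stated for every representation of `g` as a sum of simple tensors). -/
def IsRealMetric (P : BalPair B Ω Ω T) (S : StarData B Ω) (g : T) : Prop :=
  ∀ (n : ℕ) (α β : Fin n → Ω), g = ∑ i, P.tp (α i) (β i) →
    g = ∑ i, P.tp (S.st (β i)) (S.st (α i))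

/-- The Beggs–Majid `∗`-preserving condition
`σ̄ ∘ Υ⁻¹ ∘ (⋆ ⊗ ⋆) ∘ ∇ = ∇̄ ∘ ⋆` for a bimodule connection `(∇, σ)` on `Ω¹`,
written out on representations `∇ω = Σᵢ αᵢ ⊗ βᵢ`:  `∇(ω∗) = Σᵢ σ(βᵢ∗ ⊗ αᵢ∗)`. -/
def IsStarPreserving (P : BalPair B Ω Ω T) (S : StarData B Ω)
    (cn : Ω →ₗ[ℂ] T) (σ : T →ₗ[ℂ] T) : Prop :=
  ∀ (ω : Ω) (n : ℕ) (α β : Fin n → Ω), cn ω = ∑ i, P.tp (α i) (β i) →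
    cn (S.st ω) = ∑ i, σ (P.tp (S.st (β i)) (S.st (α i)))

/-- Compatibility of a connection `∇` on `E` with an Hermitian metric (with associated
sesquilinear pairing `h`), in the sense of Beggs–Majid:
`d⟨·,·⟩ = (id ⊗ ⟨·,·⟩)(∇ ⊗ id) + (⟨·,·⟩ ⊗ id)(id ⊗ ∇̃)`, written out on
representations `∇e = Σᵢ αᵢ ⊗ xᵢ`, `∇f = Σⱼ βⱼ ⊗ yⱼ`. -/
def IsHermCompatible (P : BalPair B Ω E TE) (d : B →ₗ[ℂ] Ω) (S : StarData B Ω)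
    (h : E → E → B) (cn : E →ₗ[ℂ] TE) : Prop :=
  ∀ (e f : E) (n m : ℕ) (α : Fin n → Ω) (x : Fin n → E) (β : Fin m → Ω) (y : Fin m → E),
    cn e = ∑ i, P.tp (α i) (x i) → cn f = ∑ j, P.tp (β j) (y j) →
    d (h e f) = (∑ i, op (h (x i) f) • α i) + ∑ j, h e (y j) • S.st (β j)

/-- A connection `∇'` on `E` for the calculus `(Ω¹, d')` with †-structure `dag` is
Hermitian with respect to the sesquilinear form `h` (Mesland–Rennie):
`d'⟨⟨e,f⟩⟩ = ⟨⟨∇'e, f⟩⟩ − ⟨⟨e, ∇'f⟩⟩`, written out on representations. -/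
def IsHermitianConnection (P : BalPair B Ω E TE) (d' : B →ₗ[ℂ] Ω) (dag : Ω → Ω)
    (h : E → E → B) (cn' : E →ₗ[ℂ] TE) : Prop :=
  ∀ (e f : E) (n m : ℕ) (α : Fin n → Ω) (x : Fin n → E) (β : Fin m → Ω) (y : Fin m → E),
    cn' e = ∑ i, P.tp (α i) (x i) → cn' f = ∑ j, P.tp (β j) (y j) →
    d' (h e f) = (∑ i, op (h (x i) f) • α i) - ∑ j, h e (y j) • dag (β j)

end StarNotions

section Junk

variable {B : Type} [Ring B] [Algebra ℂ B]
variable {Ω T : Type}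
  [AddCommGroup Ω] [Module ℂ Ω] [Module B Ω] [Module Bᵐᵒᵖ Ω]
  [AddCommGroup T] [Module ℂ T] [Module B T] [Module Bᵐᵒᵖ T]

/-- The junk 2-tensors `JT²_d = { π̂(δω) : ω ∈ Ω¹_u ∩ Ker π̂ }` of a first order calculus,
realized concretely inside `T = Ω¹ ⊗_B Ω¹`. -/
def junkTwoTensors (P : BalPair B Ω Ω T) (D : FODC B Ω) : Set T :=
  {t | ∃ (n : ℕ) (a b : Fin n → B), (∑ i, a i * b i = 0) ∧ (∑ i, a i • D.d (b i) = 0) ∧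
    t = ∑ i, P.tp (D.d (a i)) (D.d (b i))}

/-- Torsion-freeness in the sense of Mesland–Rennie for a weak second order
differential structure `(Ω¹, d, ψ)`: `(1 − ψ)∇ = d_ψ`, where
`d_ψ(Σᵢ aᵢ dbᵢ) = (1 − ψ)(Σᵢ daᵢ ⊗ dbᵢ)` (well defined since `JT²_d ⊆ Ran ψ`). -/
def IsTorsionFreeMR (P : BalPair B Ω Ω T) (d : B →ₗ[ℂ] Ω) (ψ : T →ₗ[ℂ] T)
    (cn : Ω →ₗ[ℂ] T) : Prop :=
  ∀ (n : ℕ) (a b : Fin n → B),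
    cn (∑ i, a i • d (b i)) - ψ (cn (∑ i, a i • d (b i))) =
      (∑ i, P.tp (d (a i)) (d (b i))) - ψ (∑ i, P.tp (d (a i)) (d (b i)))

end Junk


/-- An Hermitian metric on a `B`-bimodule `E` over a `∗`-algebra `B`, encoded through the
associated pairing `h e f = ⟨e, f̄⟩ = H(f̄)(e)`.  The fields express exactly that
`H : Ē → {left B-linear maps E → B}` is a `B`-bimodule isomorphism satisfying
`⟨y, x̄⟩∗ = ⟨x, ȳ⟩`. -/
structure HermMetric (B E : Type) [Ring B] [Algebra ℂ B] [StarRing B]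
    [AddCommGroup E] [Module ℂ E] [Module B E] [Module Bᵐᵒᵖ E] : Type where
  h : E → E → B
  h_add_left : ∀ x y e, h (x + y) e = h x e + h y e
  h_add_right : ∀ e x y, h e (x + y) = h e x + h e y
  h_left : ∀ (b : B) (e f : E), h (b • e) f = b * h e f
  h_smul_left : ∀ (c : ℂ) (e f : E), h (c • e) f = c • h e f
  h_smul_right : ∀ (c : ℂ) (e f : E), h e (c • f) = (starRingEnd ℂ c) • h e f
  h_bmod_left : ∀ (b : B) (e f : E), h (op b • e) f = h e (op (star b) • f)
  h_bmod_right : ∀ (b : B) (e f : E), h e (b • f) = h e f * star b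
  h_symm : ∀ e f, star (h e f) = h f e
  h_inj : ∀ x y : E, (∀ e, h e x = h e y) → x = y
  h_surj : ∀ φ : E →ₗ[B] B, ∃ x : E, ∀ e, φ e = h e x

/-! Replacing `e` by `√−1 e` and the coefficients `yⱼ` of `∇f` by `−√−1 yⱼ` turns representations
of `√−1∇e`, `√−1∇f` into representations of `∇(√−1 e)`, `∇f`. Since `⟨·,·⟩` is sesquilinear, the
Beggs–Majid identity at these data is the Mesland–Rennie identity at the original ones: the left side
and the `∇e`-term pick up `√−1`, and the `∇̃f`-term picks up `√−1 · conj(−√−1) = −1`. -/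

namespace BalPair

variable {B : Type} [Ring B] [Algebra ℂ B]
  {M N T : Type} [AddCommGroup M] [Module ℂ M] [Module B M] [Module Bᵐᵒᵖ M]
  [AddCommGroup N] [Module ℂ N] [Module B N] [Module Bᵐᵒᵖ N]
  [AddCommGroup T] [Module ℂ T] [Module B T] [Module Bᵐᵒᵖ T]

theorem smul_eq_sum_tp_iff (P : BalPair B M N T) {c : ℂ} (hc : c ≠ 0) (t : T) {n : ℕ}
    (α : Fin n → M) (y : Fin n → N) :
    c • t = ∑ j, P.tp (α j) (y j) ↔ t = ∑ j, P.tp (α j) (c⁻¹ • y j) := by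
  simp only [map_smul, ← Finset.smul_sum]
  exact ⟨fun h => by rw [← h, inv_smul_smul₀ hc], fun h => by rw [h, smul_inv_smul₀ hc]⟩

end BalPair

namespace HermMetric

variable {B : Type} [Ring B] [Algebra ℂ B] [StarRing B]
  {Ω E : Type} [AddCommGroup Ω] [Module ℂ Ω] [Module B Ω] [Module Bᵐᵒᵖ Ω]
  [AddCommGroup E] [Module ℂ E] [Module B E] [Module Bᵐᵒᵖ E]

theorem h_I_smul_neg_I_smul (M : HermMetric B E) (e y : E) :
    M.h (Complex.I • e) ((-Complex.I) • y) = -M.h e y := by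
  rw [M.h_smul_right, M.h_smul_left, smul_smul, map_neg, Complex.conj_I, neg_neg,
    Complex.I_mul_I, neg_one_smul]

theorem compat_eq_iff_hermitian_eq (M : HermMetric B E) (d : B →ₗ[ℂ] Ω) (dag : Ω → Ω)
    (e f : E) {n m : ℕ} (α : Fin n → Ω) (x : Fin n → E) (β : Fin m → Ω) (y : Fin m → E) :
    d (M.h (Complex.I • e) f) =
        (∑ i, op (M.h (x i) f) • α i) +
          ∑ j, M.h (Complex.I • e) ((-Complex.I) • y j) • dag (β j) ↔
      (Complex.I • d) (M.h e f) =
        (∑ i, op (M.h (x i) f) • α i) - ∑ j, M.h e (y j) • dag (β j) := by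
  simp only [h_I_smul_neg_I_smul]
  rw [M.h_smul_left, map_smul, LinearMap.smul_apply]
  simp only [neg_smul, Finset.sum_neg_distrib, sub_eq_add_neg]

end HermMetric

theorem statement5_general
    {B : Type} [Ring B] [Algebra ℂ B] [StarRing B]
    {Ω E TE : Type} [AddCommGroup Ω] [Module ℂ Ω] [Module B Ω] [Module Bᵐᵒᵖ Ω]
    [AddCommGroup E] [Module ℂ E] [Module B E] [Module Bᵐᵒᵖ E]
    [AddCommGroup TE] [Module ℂ TE] [Module B TE] [Module Bᵐᵒᵖ TE]
    -- the first order ∗-differential calculus (Ω¹, d)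
    (D : FODC B Ω) (S : StarData B Ω)
    -- the balanced tensor product TE = Ω¹ ⊗_B E
    (P : BalPair B Ω E TE)
    -- an Hermitian metric on E
    (M : HermMetric B E)
    -- a left connection on E
    (cn : E →ₗ[ℂ] TE) :
    IsHermCompatible P D.d S M.h cn ↔
      IsHermitianConnection P (Complex.I • D.d) S.st M.h (Complex.I • cn) := by
  have hI_inv : Complex.I⁻¹ = -Complex.I := Complex.inv_I
  constructor
  · intro hcompat e f n m α x β y he hf
    rw [LinearMap.smul_apply, ← map_smul] at he
    rw [LinearMap.smul_apply, P.smul_eq_sum_tp_iff Complex.I_ne_zero, hI_inv] at hf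
    exact (M.compat_eq_iff_hermitian_eq D.d S.st e f α x β y).1 (hcompat _ f n m α x β _ he hf)
  · intro hherm e f n m α x β y he hf
    have hI_neg_I : ∀ z : E, Complex.I • (-Complex.I) • z = z := fun z => by
      rw [smul_smul, mul_neg, Complex.I_mul_I, neg_neg, one_smul]
    have hneg_I_I : ∀ z : E, (-Complex.I) • Complex.I • z = z := fun z => by
      rw [smul_smul, neg_mul, Complex.I_mul_I, neg_neg, one_smul]
    have key := (M.compat_eq_iff_hermitian_eq D.d S.st ((-Complex.I) • e) f α x β
      (fun j => Complex.I • y j)).2 <| hherm _ f n m α x β _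
        (by rw [LinearMap.smul_apply, ← map_smul, hI_neg_I, he])
        (by rw [LinearMap.smul_apply, P.smul_eq_sum_tp_iff Complex.I_ne_zero, hI_inv]
            simpa only [hneg_I_I] using hf)
    simpa only [hI_neg_I, hneg_I_I] using key

/-- Let `H` be an Hermitian metric on a `B`-bimodule `E` and `∇` a left
connection on `E` for a first order `∗`-differential calculus `(Ω¹, d)`.  Then `∇` is
compatible with `H` in the Beggs–Majid sense iff the connection `√−1·∇` for the first
order calculus `(Ω¹, √−1·d)` is Hermitian in the Mesland–Rennie sense with respect to the
sesquilinear form `⟨⟨e,f⟩⟩ = H(f̄)(e)`, where `Ω¹` carries the `†`-structure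
`†(ω) = ω∗`. -/
theorem statement5
    {B : Type} [Ring B] [Algebra ℂ B] [StarRing B] [StarModule ℂ B]
    {Ω E TE : Type} [AddCommGroup Ω] [Module ℂ Ω] [Module B Ω] [Module Bᵐᵒᵖ Ω]
    [AddCommGroup E] [Module ℂ E] [Module B E] [Module Bᵐᵒᵖ E]
    [AddCommGroup TE] [Module ℂ TE] [Module B TE] [Module Bᵐᵒᵖ TE]
    -- the first order ∗-differential calculus (Ω¹, d)
    (D : FODC B Ω) (S : StarData B Ω)
    (hdstar : ∀ b : B, S.st (D.d b) = D.d (star b))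
    -- the balanced tensor product TE = Ω¹ ⊗_B E
    (P : BalPair B Ω E TE)
    -- an Hermitian metric on E
    (M : HermMetric B E)
    -- a left connection on E
    (cn : E →ₗ[ℂ] TE) (hconn : IsConnection P D.d cn) :
    IsHermCompatible P D.d S M.h cn ↔
      IsHermitianConnection P (Complex.I • D.d) S.st M.h (Complex.I • cn) :=
  statement5_general D S P M cn
end
end

section
/- Let (Ω•, ∧, d) be a differential calculus on an algebra B. Then the Connes differential calculus built from the first order calculus (Ω¹, d) with ambient algebra M = Ω• coincides with (Ω•, ∧, d) itself: every junk space J^k_d vanishes, Ω^k_C = Ω^k, ∧_C = ∧ and d_C = d. -/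
/-!
For `b₀, …, b_m ∈ Ω⁰`, the Leibniz rule together with `d² = 0` gives
`d (b₀ db₁ ⋯ db_m) = db₀ db₁ ⋯ db_m`. Hence a junk element `Σ_j d(a₀ʲ) ⋯ d(a_mʲ)` is `d` of
`Σ_j a₀ʲ da₁ʲ ⋯ da_mʲ = 0`, so it vanishes, and `d_C` is `d`. Since `Ω•` is generated by `Ω⁰`
and `dΩ⁰`, every generator `b₀ db₁ ⋯ db_k` of `Ω^k` is the product of the one-forms
`b₀ db₁, db₂, …, db_k`, so `Ω^k` is spanned by products of `k` one-forms.
-/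

section GradedDerivation

variable {K Om : Type*} [CommRing K] [Ring Om] [Algebra K Om]

def IsGradedLeibniz (𝒜 : ℕ → Submodule K Om) (d : Om →ₗ[K] Om) : Prop :=
  ∀ (k : ℕ) (x y : Om), x ∈ 𝒜 k → d (x * y) = d x * y + ((-1 : K) ^ k) • (x * d y)

variable {𝒜 : ℕ → Submodule K Om} [SetLike.GradedMonoid 𝒜] {d : Om →ₗ[K] Om}

namespace IsGradedLeibniz

theorem map_one (hleibniz : IsGradedLeibniz 𝒜 d) : d 1 = 0 := by
  simpa using hleibniz 0 1 1 (SetLike.one_mem_graded 𝒜)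

theorem map_prod_ofFn_d (hleibniz : IsGradedLeibniz 𝒜 d)
    (hd_deg : ∀ x ∈ 𝒜 0, d x ∈ 𝒜 1) (hd2 : ∀ x, d (d x) = 0) :
    ∀ {m : ℕ} (b : Fin m → Om), (∀ i, b i ∈ 𝒜 0) →
      d (List.ofFn fun i => d (b i)).prod = 0
  | 0, _, _ => by simpa using hleibniz.map_one
  | m + 1, b, hb => by
    rw [List.ofFn_succ, List.prod_cons, hleibniz 1 _ _ (hd_deg _ (hb 0)), hd2,
      hleibniz.map_prod_ofFn_d hd_deg hd2 (fun i : Fin m => b i.succ) (fun i => hb i.succ)]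
    simp

theorem map_mul_prod_ofFn_d (hleibniz : IsGradedLeibniz 𝒜 d)
    (hd_deg : ∀ x ∈ 𝒜 0, d x ∈ 𝒜 1) (hd2 : ∀ x, d (d x) = 0)
    {m : ℕ} (a : Fin (m + 1) → Om) (ha : ∀ i, a i ∈ 𝒜 0) :
    d (a 0 * (List.ofFn fun i : Fin m => d (a i.succ)).prod) =
      (List.ofFn fun i => d (a i)).prod := by
  rw [hleibniz 0 _ _ (ha 0),
    hleibniz.map_prod_ofFn_d hd_deg hd2 (fun i : Fin m => a i.succ) (fun i => ha i.succ),
    List.ofFn_succ, List.prod_cons]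
  simp

theorem sum_prod_ofFn_d_eq_zero (hleibniz : IsGradedLeibniz 𝒜 d)
    (hd_deg : ∀ x ∈ 𝒜 0, d x ∈ 𝒜 1) (hd2 : ∀ x, d (d x) = 0)
    {m n : ℕ} (a : Fin n → Fin (m + 1) → Om) (ha : ∀ j i, a j i ∈ 𝒜 0)
    (hsum : ∑ j, a j 0 * (List.ofFn fun i : Fin m => d (a j i.succ)).prod = 0) :
    ∑ j, (List.ofFn fun i => d (a j i)).prod = 0 := by
  simp_rw [← hleibniz.map_mul_prod_ofFn_d hd_deg hd2 _ (ha _), ← map_sum, hsum, map_zero]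

end IsGradedLeibniz

theorem SetLike.list_prod_ofFn_mem_graded_one {k : ℕ} (ω : Fin k → Om) (hω : ∀ i, ω i ∈ 𝒜 1) : (List.ofFn ω).prod ∈ 𝒜 k := by
  simpa using SetLike.list_prod_ofFn_mem_graded (fun _ => 1) ω hω

theorem span_prod_ofFn_one_forms_eq (hd_deg : ∀ x ∈ 𝒜 0, d x ∈ 𝒜 1) {k : ℕ} (hk : 1 ≤ k)
    (hgen : 𝒜 k = Submodule.span K {x : Om | ∃ (b₀ : Om) (b : Fin k → Om),
      b₀ ∈ 𝒜 0 ∧ (∀ i, b i ∈ 𝒜 0) ∧ x = b₀ * (List.ofFn fun i => d (b i)).prod}) :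
    Submodule.span K {x : Om | ∃ ω : Fin k → Om, (∀ i, ω i ∈ 𝒜 1) ∧
      x = (List.ofFn ω).prod} = 𝒜 k := by
  apply le_antisymm
  · rw [Submodule.span_le]
    rintro _ ⟨ω, hω, rfl⟩
    exact SetLike.list_prod_ofFn_mem_graded_one ω hω
  · obtain ⟨m, rfl⟩ := Nat.exists_eq_add_of_le' hk
    rw [hgen, Submodule.span_le]
    rintro _ ⟨b₀, b, hb₀, hb, rfl⟩
    refine Submodule.subset_span ⟨Fin.cons (b₀ * d (b 0)) fun i => d (b i.succ), ?_, ?_⟩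
    · exact Fin.cases (SetLike.mul_mem_graded hb₀ (hd_deg _ (hb 0)))
        fun i => hd_deg _ (hb i.succ)
    · simp [List.ofFn_succ, mul_assoc]

end GradedDerivation

theorem statement7
    (Om : Type) [Ring Om] [Algebra ℂ Om]
    (𝒜 : ℕ → Submodule ℂ Om) [GradedRing 𝒜]
    (d : Om →ₗ[ℂ] Om)
    (hd_deg : ∀ (k : ℕ) (x : Om), x ∈ 𝒜 k → d x ∈ 𝒜 (k + 1))
    (hd2 : ∀ x, d (d x) = 0)
    (hleibniz : ∀ (k : ℕ) (x y : Om), x ∈ 𝒜 k →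
      d (x * y) = d x * y + ((-1 : ℂ) ^ k) • (x * d y))
    (hgen : ∀ k : ℕ, 𝒜 k = Submodule.span ℂ {x : Om | ∃ (b₀ : Om) (b : Fin k → Om),
      b₀ ∈ 𝒜 0 ∧ (∀ i, b i ∈ 𝒜 0) ∧ x = b₀ * (List.ofFn fun i => d (b i)).prod}) :
    -- (1) all the junk spaces J^k_d (k = m + 1 ≥ 1) vanish
    (∀ (m n : ℕ) (a : Fin n → Fin (m + 1) → Om), (∀ j i, a j i ∈ 𝒜 0) →
      (∑ j, (a j 0) * (List.ofFn fun i : Fin m => d (a j i.succ)).prod) = 0 →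
      (∑ j, (List.ofFn fun i : Fin (m + 1) => d (a j i)).prod) = 0) ∧
    -- (2) Ran(m_k) = Ω^k, so that Ω^k_C = Ran(m_k)/J^k_d = Ω^k
    (∀ k : ℕ, 1 ≤ k →
      Submodule.span ℂ {x : Om | ∃ ω : Fin k → Om, (∀ i, ω i ∈ 𝒜 1) ∧
        x = (List.ofFn ω).prod} = 𝒜 k) ∧
    -- (3) d_C = d on representatives b₀ db₁ ⋯ db_m
    (∀ (m : ℕ) (a : Fin (m + 1) → Om), (∀ i, a i ∈ 𝒜 0) →
      d ((a 0) * (List.ofFn fun i : Fin m => d (a i.succ)).prod) =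
        (List.ofFn fun i : Fin (m + 1) => d (a i)).prod) := by
  have hleibniz : IsGradedLeibniz 𝒜 d := hleibniz
  have hd_deg₀ : ∀ x ∈ 𝒜 0, d x ∈ 𝒜 1 := hd_deg 0
  exact ⟨fun _ _ a ha => hleibniz.sum_prod_ofFn_d_eq_zero hd_deg₀ hd2 a ha,
    fun k hk => span_prod_ofFn_one_forms_eq hd_deg₀ hk (hgen k),
    fun _ a ha => hleibniz.map_mul_prod_ofFn_d hd_deg₀ hd2 a ha⟩
end

section
/- Let (Ω¹, d, ψ) be a weak second order differential structure such that Ω¹ is a sub-bimodule of a B-bimodule M which is an algebra. Then the following statements are equivalent: (i) Ran(ψ) ⊆ m₂⁻¹(J²_d); (ii) Ran(m₂ ∘ ψ) = J²_d; (iii) the map ∧_C ∘ ψ : Ω¹ ⊗_B Ω¹ → Ω²_C is identically zero, i.e. Ran(ψ) ⊆ Ker(∧_C). -/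
open MulOpposite

noncomputable section

/-! The Connes junk forms are `J²_d = m₂(JT²_d)`, and `JT²_d` is a `ℂ`-subspace, so `J²_d` is
one too: it equals its span, hence `x ∈ Ran m₂` vanishes in `Ω²_C` iff `x ∈ J²_d`, which is
(i) ⇔ (iii). Since `JT²_d ⊆ Ran ψ`, also `J²_d ⊆ Ran(m₂ ∘ ψ)`, so the inclusion
`Ran(m₂ ∘ ψ) ⊆ J²_d` of (i) is the same as the equality (ii). -/

section JunkSubmodule

variable {B : Type} [Ring B] [Algebra ℂ B]
variable {Ω T : Type}
  [AddCommGroup Ω] [Module ℂ Ω] [Module B Ω] [Module Bᵐᵒᵖ Ω]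
  [AddCommGroup T] [Module ℂ T] [Module B T] [Module Bᵐᵒᵖ T]
  (P : BalPair B Ω Ω T) (D : FODC B Ω)

theorem zero_mem_junkTwoTensors : (0 : T) ∈ junkTwoTensors P D :=
  ⟨0, Fin.elim0, Fin.elim0, by simp, by simp, by simp⟩

theorem add_mem_junkTwoTensors {s t : T} (hs : s ∈ junkTwoTensors P D)
    (ht : t ∈ junkTwoTensors P D) : s + t ∈ junkTwoTensors P D := by
  obtain ⟨n, a, b, hab, hadb, rfl⟩ := hs
  obtain ⟨m, a', b', hab', hadb', rfl⟩ := ht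
  refine ⟨n + m, Fin.append a a', Fin.append b b', ?_, ?_, ?_⟩ <;>
    simp [Fin.sum_univ_add, *]

theorem smul_mem_junkTwoTensors (c : ℂ) {t : T} (ht : t ∈ junkTwoTensors P D) :
    c • t ∈ junkTwoTensors P D := by
  obtain ⟨n, a, b, hab, hadb, rfl⟩ := ht
  -- `Ω` carries no compatibility between its `ℂ`- and `B`-actions, so scale through `c • 1 ∈ B`.
  have smul_smul_d (i : Fin n) :
      (c • a i) • D.d (b i) = (c • (1 : B)) • (a i • D.d (b i)) := by
    rw [← mul_smul, smul_mul_assoc, one_mul]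
  refine ⟨n, fun i => c • a i, b, ?_, ?_, ?_⟩
  · simp only [smul_mul_assoc, ← Finset.smul_sum, hab, smul_zero]
  · simp only [smul_smul_d, ← Finset.smul_sum, hadb, smul_zero]
  · simp only [map_smul, LinearMap.smul_apply, Finset.smul_sum]

def junkTwoTensorsSubmodule : Submodule ℂ T where
  carrier := junkTwoTensors P D
  zero_mem' := zero_mem_junkTwoTensors P D
  add_mem' := add_mem_junkTwoTensors P D
  smul_mem' := smul_mem_junkTwoTensors P D

theorem coe_map_junkTwoTensorsSubmodule {M : Type} [AddCommMonoid M] [Module ℂ M] [Mul M]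
    (j : Ω → M) (m₂ : T →ₗ[ℂ] M) (hm₂ : ∀ ω η, m₂ (P.tp ω η) = j ω * j η) :
    ((junkTwoTensorsSubmodule P D).map m₂ : Set M) =
      {x : M | ∃ (n : ℕ) (a b : Fin n → B), (∑ i, a i * b i = 0) ∧
        (∑ i, a i • D.d (b i) = 0) ∧ x = ∑ i, j (D.d (a i)) * j (D.d (b i))} := by
  ext x
  simp only [Submodule.map_coe, Set.mem_image, Set.mem_ofPred_eq]
  constructor
  · rintro ⟨_, ⟨n, a, b, hab, hadb, rfl⟩, rfl⟩
    exact ⟨n, a, b, hab, hadb, by simp [hm₂]⟩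
  · rintro ⟨n, a, b, hab, hadb, rfl⟩
    exact ⟨_, ⟨n, a, b, hab, hadb, rfl⟩, by simp [hm₂]⟩

end JunkSubmodule

theorem statement8_general
    {B : Type} [Ring B] [Algebra ℂ B]
    {Ω T : Type} [AddCommGroup Ω] [Module ℂ Ω] [Module B Ω] [Module Bᵐᵒᵖ Ω]
    [AddCommGroup T] [Module ℂ T] [Module B T] [Module Bᵐᵒᵖ T]
    (P : BalPair B Ω Ω T) (D : FODC B Ω)
    -- the idempotent ψ of the weak second order differential structure
    (ψ : T →ₗ[ℂ] T)
    (hjunk : junkTwoTensors P D ⊆ Set.range ψ)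
    -- the ambient algebra M, containing Ω¹ as a sub-bimodule
    (M : Type) [Ring M] [Algebra ℂ M]
    (j : Ω →ₗ[ℂ] M)
    -- the multiplication map m₂ : Ω¹ ⊗_B Ω¹ → M
    (m₂ : T →ₗ[ℂ] M) (hm₂ : ∀ ω η, m₂ (P.tp ω η) = j ω * j η)
    -- the degree two Connes junk forms J²_d
    (J2 : Set M)
    (hJ2 : J2 = {x : M | ∃ (n : ℕ) (a b : Fin n → B), (∑ i, a i * b i = 0) ∧
      (∑ i, a i • D.d (b i) = 0) ∧ x = ∑ i, j (D.d (a i)) * j (D.d (b i))}) :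
    ((∀ t : T, m₂ (ψ t) ∈ J2) ↔ ({x : M | ∃ t, x = m₂ (ψ t)} = J2)) ∧
    ((∀ t : T, m₂ (ψ t) ∈ J2) ↔
      (∀ t : T, (Submodule.Quotient.mk (m₂ (ψ t)) : M ⧸ Submodule.span ℂ J2) = 0)) := by
  set N := (junkTwoTensorsSubmodule P D).map m₂
  have hN : (N : Set M) = J2 := hJ2 ▸ coe_map_junkTwoTensorsSubmodule P D j m₂ hm₂
  have hrange : {x : M | ∃ t, x = m₂ (ψ t)} = Set.range (m₂ ∘ ψ) := by
    ext; simp [eq_comm]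
  have hJ2_sub_range : J2 ⊆ Set.range (m₂ ∘ ψ) := by
    rw [← hN, Set.range_comp]
    exact Set.image_mono hjunk
  have hspan : Submodule.span ℂ J2 = N := hN ▸ Submodule.span_eq N
  refine ⟨?_, ?_⟩
  · rw [hrange, ← Set.range_subset_iff]
    exact ⟨fun h => h.antisymm hJ2_sub_range, fun h => h.subset⟩
  · simp only [Submodule.Quotient.mk_eq_zero, hspan, ← SetLike.mem_coe, hN]

/-- Lemma on junk forms.  Let `(Ω¹, d, ψ)` be a weak second order
differential structure such that `Ω¹` is a sub-bimodule of a `B`-bimodule `M` which is an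
algebra.  With `m₂ : Ω¹ ⊗_B Ω¹ → M` the multiplication map, `J²_d` the Connes junk
forms of degree two and `Ω²_C = Ran(m₂)/J²_d`, TFAE:
(i) `Ran(ψ) ⊆ m₂⁻¹(J²_d)`;
(ii) `Ran(m₂ ∘ ψ) = J²_d`;
(iii) `∧_C ∘ ψ : Ω¹ ⊗_B Ω¹ → Ω²_C` is identically zero. -/
theorem statement8
    {B : Type} [Ring B] [Algebra ℂ B]
    {Ω T : Type} [AddCommGroup Ω] [Module ℂ Ω] [Module B Ω] [Module Bᵐᵒᵖ Ω]
    [AddCommGroup T] [Module ℂ T] [Module B T] [Module Bᵐᵒᵖ T]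
    (P : BalPair B Ω Ω T) (D : FODC B Ω)
    -- the idempotent ψ of the weak second order differential structure
    (ψ : T →ₗ[ℂ] T) (hψbimod : IsBimoduleMap (B := B) ψ)
    (hψidem : ∀ t, ψ (ψ t) = ψ t)
    (hjunk : junkTwoTensors P D ⊆ Set.range ψ)
    -- the ambient algebra M, containing Ω¹ as a sub-bimodule
    (M : Type) [Ring M] [Algebra ℂ M] [Module B M] [Module Bᵐᵒᵖ M]
    (j : Ω →ₗ[ℂ] M) (hj_inj : Function.Injective j)
    (hj_left : ∀ (b : B) (ω : Ω), j (b • ω) = b • j ω)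
    (hj_right : ∀ (b : B) (ω : Ω), j (op b • ω) = op b • j ω)
    (hM_left : ∀ (b : B) (x y : M), (b • x) * y = b • (x * y))
    (hM_right : ∀ (b : B) (x y : M), x * (op b • y) = op b • (x * y))
    (hM_bal : ∀ (b : B) (x y : M), (op b • x) * y = x * (b • y))
    -- the multiplication map m₂ : Ω¹ ⊗_B Ω¹ → M
    (m₂ : T →ₗ[ℂ] M) (hm₂ : ∀ ω η, m₂ (P.tp ω η) = j ω * j η)
    -- the degree two Connes junk forms J²_d
    (J2 : Set M)
    (hJ2 : J2 = {x : M | ∃ (n : ℕ) (a b : Fin n → B), (∑ i, a i * b i = 0) ∧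
      (∑ i, a i • D.d (b i) = 0) ∧ x = ∑ i, j (D.d (a i)) * j (D.d (b i))}) :
    ((∀ t : T, m₂ (ψ t) ∈ J2) ↔ ({x : M | ∃ t, x = m₂ (ψ t)} = J2)) ∧
    ((∀ t : T, m₂ (ψ t) ∈ J2) ↔
      (∀ t : T, (Submodule.Quotient.mk (m₂ (ψ t)) : M ⧸ Submodule.span ℂ J2) = 0)) :=
  statement8_general P D ψ hjunk M j m₂ hm₂ J2 hJ2

end
end

section
/- Let (Ω¹, d, ψ) be a weak second order differential structure with Ω¹ a sub-bimodule of a B-bimodule M which is an algebra, and let ∇ be a connection on Ω¹. Then: (i) if Ker(∧_C) ⊆ Ran(ψ) and ∧_C ∘ ∇ = d_C, then (1 − ψ)∇ = d_ψ; (ii) if Ran(ψ) ⊆ Ker(∧_C) (equivalently Ran(m₂ ∘ ψ) = J²_d) and (1 − ψ)∇ = d_ψ, then ∧_C ∘ ∇ = d_C. -/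
open MulOpposite

noncomputable section

/-! The Connes differential of `ω = Σᵢ aᵢ dbᵢ` is the class of `m₂(Σᵢ daᵢ ⊗ dbᵢ)`, and `d_ψ ω` is
`(1 − ψ)(Σᵢ daᵢ ⊗ dbᵢ)`. Hence both `∧_C ∘ ∇ = d_C` and `(1 − ψ)∇ = d_ψ` are statements about the
difference `∇ω − Σᵢ daᵢ ⊗ dbᵢ`: the first says it lies in `Ker ∧_C`, the second in
`Ker(1 − ψ) = Ran ψ`. Each inclusion between these kernels gives one implication. -/

section Idempotent

variable {R T Q : Type*} [Ring R] [AddCommGroup T] [Module R T] [AddCommGroup Q] [Module R Q]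
  {ψ : T →ₗ[R] T} {f : T →ₗ[R] Q} {x y : T}

theorem sub_apply_eq_sub_apply_of_ker_le_range (hψ : ∀ t, ψ (ψ t) = ψ t)
    (hker : LinearMap.ker f ≤ LinearMap.range ψ) (h : f x = f y) : x - ψ x = y - ψ y := by
  obtain ⟨s, hs⟩ : x - y ∈ LinearMap.range ψ := hker (by simp [h])
  have hfix : ψ (x - y) = x - y := by rw [← hs, hψ]
  rw [map_sub] at hfix
  rw [sub_eq_sub_iff_sub_eq_sub, ← hfix]

theorem apply_eq_apply_of_range_le_ker (hrange : LinearMap.range ψ ≤ LinearMap.ker f)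
    (h : x - ψ x = y - ψ y) : f x = f y := by
  have hψf : ∀ t, f (ψ t) = 0 := fun t => hrange ⟨t, rfl⟩
  rw [sub_eq_sub_iff_sub_eq_sub] at h
  rw [← sub_eq_zero, ← map_sub, h, ← map_sub, hψf]

end Idempotent

theorem statement9_general
    {B : Type} [Ring B] [Algebra ℂ B]
    {Ω T : Type} [AddCommGroup Ω] [Module ℂ Ω] [Module B Ω] [Module Bᵐᵒᵖ Ω]
    [AddCommGroup T] [Module ℂ T] [Module B T] [Module Bᵐᵒᵖ T]
    (P : BalPair B Ω Ω T) (D : FODC B Ω)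
    -- the idempotent ψ of the weak second order differential structure
    (ψ : T →ₗ[ℂ] T)
    (hψidem : ∀ t, ψ (ψ t) = ψ t)
    -- the ambient algebra M, containing Ω¹ as a sub-bimodule
    (M : Type) [Ring M] [Algebra ℂ M]
    (j : Ω →ₗ[ℂ] M)
    -- the multiplication map m₂ : Ω¹ ⊗_B Ω¹ → M
    (m₂ : T →ₗ[ℂ] M) (hm₂ : ∀ ω η, m₂ (P.tp ω η) = j ω * j η)
    -- the degree two Connes junk forms J²_d
    (J2 : Set M)
    -- a connection ∇ on Ω¹
    (cn : Ω →ₗ[ℂ] T) :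
    -- (i)
    ((∀ t : T, (Submodule.Quotient.mk (m₂ t) : M ⧸ Submodule.span ℂ J2) = 0 →
        t ∈ Set.range ψ) →
      (∀ (n : ℕ) (a b : Fin n → B),
        (Submodule.Quotient.mk (m₂ (cn (∑ i, a i • D.d (b i)))) :
            M ⧸ Submodule.span ℂ J2) =
          Submodule.Quotient.mk (∑ i, j (D.d (a i)) * j (D.d (b i)))) →
      IsTorsionFreeMR P D.d ψ cn) ∧
    -- (ii)
    ((∀ t : T, m₂ (ψ t) ∈ J2) → IsTorsionFreeMR P D.d ψ cn →
      (∀ (n : ℕ) (a b : Fin n → B),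
        (Submodule.Quotient.mk (m₂ (cn (∑ i, a i • D.d (b i)))) :
            M ⧸ Submodule.span ℂ J2) =
          Submodule.Quotient.mk (∑ i, j (D.d (a i)) * j (D.d (b i))))) := by
  set wedge := (Submodule.span ℂ J2).mkQ ∘ₗ m₂
  have hm₂_dd : ∀ (n : ℕ) (a b : Fin n → B),
      m₂ (∑ i, P.tp (D.d (a i)) (D.d (b i))) = ∑ i, j (D.d (a i)) * j (D.d (b i)) := by
    simp [map_sum, hm₂]
  refine ⟨fun hker hC n a b => ?_, fun hran htf n a b => ?_⟩
  · refine sub_apply_eq_sub_apply_of_ker_le_range hψidem (f := wedge) hker ?_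
    change Submodule.Quotient.mk _ = Submodule.Quotient.mk _
    rw [hm₂_dd]
    exact hC n a b
  · rw [← hm₂_dd]
    refine apply_eq_apply_of_range_le_ker (f := wedge) ?_ (htf n a b)
    rintro _ ⟨t, rfl⟩
    exact (Submodule.Quotient.mk_eq_zero _).mpr (Submodule.subset_span (hran t))

/-- Let `(Ω¹, d, ψ)` be a weak second order differential structure with
`Ω¹` a sub-bimodule of a `B`-bimodule `M` which is an algebra and let `∇` be a connection
on `Ω¹`.  With `(Ω•_C, ∧_C, d_C)` the Connes calculus, `J²_d` the degree-two junk and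
`d_ψ` the Mesland–Rennie differential:
(i) if `Ker(∧_C) ⊆ Ran(ψ)` and `∧_C ∘ ∇ = d_C`, then `(1 − ψ)∇ = d_ψ`;
(ii) if `Ran(ψ) ⊆ Ker(∧_C)` (equivalently `Ran(m₂ ∘ ψ) = J²_d`) and `(1 − ψ)∇ = d_ψ`,
then `∧_C ∘ ∇ = d_C`. -/
theorem statement9
    {B : Type} [Ring B] [Algebra ℂ B]
    {Ω T : Type} [AddCommGroup Ω] [Module ℂ Ω] [Module B Ω] [Module Bᵐᵒᵖ Ω]
    [AddCommGroup T] [Module ℂ T] [Module B T] [Module Bᵐᵒᵖ T]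
    (P : BalPair B Ω Ω T) (D : FODC B Ω)
    -- the idempotent ψ of the weak second order differential structure
    (ψ : T →ₗ[ℂ] T) (hψbimod : IsBimoduleMap (B := B) ψ)
    (hψidem : ∀ t, ψ (ψ t) = ψ t)
    (hjunk : junkTwoTensors P D ⊆ Set.range ψ)
    -- the ambient algebra M, containing Ω¹ as a sub-bimodule
    (M : Type) [Ring M] [Algebra ℂ M] [Module B M] [Module Bᵐᵒᵖ M]
    (j : Ω →ₗ[ℂ] M) (hj_inj : Function.Injective j)
    (hj_left : ∀ (b : B) (ω : Ω), j (b • ω) = b • j ω)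
    (hj_right : ∀ (b : B) (ω : Ω), j (op b • ω) = op b • j ω)
    (hM_left : ∀ (b : B) (x y : M), (b • x) * y = b • (x * y))
    (hM_right : ∀ (b : B) (x y : M), x * (op b • y) = op b • (x * y))
    (hM_bal : ∀ (b : B) (x y : M), (op b • x) * y = x * (b • y))
    -- the multiplication map m₂ : Ω¹ ⊗_B Ω¹ → M
    (m₂ : T →ₗ[ℂ] M) (hm₂ : ∀ ω η, m₂ (P.tp ω η) = j ω * j η)
    -- the degree two Connes junk forms J²_d
    (J2 : Set M)
    (hJ2 : J2 = {x : M | ∃ (n : ℕ) (a b : Fin n → B), (∑ i, a i * b i = 0) ∧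
      (∑ i, a i • D.d (b i) = 0) ∧ x = ∑ i, j (D.d (a i)) * j (D.d (b i))})
    -- a connection ∇ on Ω¹
    (cn : Ω →ₗ[ℂ] T) (hconn : IsConnection P D.d cn) :
    -- (i)
    ((∀ t : T, (Submodule.Quotient.mk (m₂ t) : M ⧸ Submodule.span ℂ J2) = 0 →
        t ∈ Set.range ψ) →
      (∀ (n : ℕ) (a b : Fin n → B),
        (Submodule.Quotient.mk (m₂ (cn (∑ i, a i • D.d (b i)))) :
            M ⧸ Submodule.span ℂ J2) =
          Submodule.Quotient.mk (∑ i, j (D.d (a i)) * j (D.d (b i)))) →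
      IsTorsionFreeMR P D.d ψ cn) ∧
    -- (ii)
    ((∀ t : T, m₂ (ψ t) ∈ J2) → IsTorsionFreeMR P D.d ψ cn →
      (∀ (n : ℕ) (a b : Fin n → B),
        (Submodule.Quotient.mk (m₂ (cn (∑ i, a i • D.d (b i)))) :
            M ⧸ Submodule.span ℂ J2) =
          Submodule.Quotient.mk (∑ i, j (D.d (a i)) * j (D.d (b i))))) :=
  statement9_general P D ψ hψidem M j m₂ hm₂ J2 cn
end
end

section
/- Let (Ω•, ∧, d) be a differential calculus on B such that Ω¹ is finitely generated projective as a left B-module. Then the assignment s ↦ ψ_s := 1 − s ∘ ∧ defines a bijective correspondence between quasi-tame structures on (Ω•, ∧, d) (i.e. B-bimodule maps s : Ω² → Ω¹ ⊗_B Ω¹ with ∧ ∘ s = id) and weak second order differential structures (Ω¹, d, ψ) satisfying Ker(∧) = Ran(ψ); the inverse sends ψ to s_ψ, the inverse of the isomorphism ∧ restricted to Ran(1 − ψ). -/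
open MulOpposite

noncomputable section

/-! The correspondence is linear algebra around the surjection `∧ : T → Ω²`. A section `s`
of `∧` splits `T = Ker ∧ ⊕ Ran s`, and `1 − s∘∧` is the projection onto `Ker ∧`; junk
tensors lie in `Ker ∧` because `∧(π̂(δω)) = d(π(ω)) = 0`. Conversely an idempotent `ψ` with
`Ran ψ = Ker ∧` makes `1 − ψ` vanish on `Ker ∧`, so it factors through `∧` as `s_ψ ∘ ∧`,
and `s_ψ` is a section of `∧` since `∧ ∘ ψ = 0`. Every map here is determined by its
values on the image of the surjection `∧`, which gives uniqueness of `s_ψ` and its bimodule property. -/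

section BimoduleMap

variable {B : Type} [Ring B]
  {M N L : Type} [AddCommGroup M] [Module ℂ M] [Module B M] [Module Bᵐᵒᵖ M]
  [AddCommGroup N] [Module ℂ N] [Module B N] [Module Bᵐᵒᵖ N]
  [AddCommGroup L] [Module ℂ L] [Module B L] [Module Bᵐᵒᵖ L]

theorem IsBimoduleMap.id : IsBimoduleMap (B := B) (LinearMap.id : M →ₗ[ℂ] M) :=
  ⟨fun _ _ => rfl, fun _ _ => rfl⟩

theorem IsBimoduleMap.comp {f : N →ₗ[ℂ] L} {g : M →ₗ[ℂ] N}
    (hf : IsBimoduleMap (B := B) f) (hg : IsBimoduleMap (B := B) g) :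
    IsBimoduleMap (B := B) (f ∘ₗ g) :=
  ⟨fun b t => by simp only [LinearMap.comp_apply, hg.1, hf.1],
    fun b t => by simp only [LinearMap.comp_apply, hg.2, hf.2]⟩

theorem IsBimoduleMap.sub {f g : M →ₗ[ℂ] N}
    (hf : IsBimoduleMap (B := B) f) (hg : IsBimoduleMap (B := B) g) :
    IsBimoduleMap (B := B) (f - g) :=
  ⟨fun b t => by simp only [LinearMap.sub_apply, hf.1, hg.1, smul_sub],
    fun b t => by simp only [LinearMap.sub_apply, hf.2, hg.2, smul_sub]⟩

theorem IsBimoduleMap.of_comp_of_surjective {f : N →ₗ[ℂ] L} {g : M →ₗ[ℂ] N}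
    (hfg : IsBimoduleMap (B := B) (f ∘ₗ g)) (hg : IsBimoduleMap (B := B) g)
    (hg_surj : Function.Surjective g) : IsBimoduleMap (B := B) f := by
  constructor
  · intro b x
    obtain ⟨t, rfl⟩ := hg_surj x
    rw [← hg.1, ← LinearMap.comp_apply, hfg.1, LinearMap.comp_apply]
  · intro b x
    obtain ⟨t, rfl⟩ := hg_surj x
    rw [← hg.2, ← LinearMap.comp_apply, hfg.2, LinearMap.comp_apply]

end BimoduleMap

section Splitting

variable {R M N : Type*} [Ring R] [AddCommGroup M] [Module R M] [AddCommGroup N] [Module R N]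
  {w : M →ₗ[R] N} {s : N →ₗ[R] M}

theorem id_sub_comp_idem (hs : ∀ x, w (s x) = x) (t : M) :
    (LinearMap.id - s ∘ₗ w : M →ₗ[R] M) ((LinearMap.id - s ∘ₗ w : M →ₗ[R] M) t) =
      (LinearMap.id - s ∘ₗ w : M →ₗ[R] M) t := by
  simp only [LinearMap.sub_apply, LinearMap.id_apply, LinearMap.comp_apply, map_sub, hs,
    sub_self, sub_zero]

theorem ker_eq_range_id_sub_comp (hs : ∀ x, w (s x) = x) :
    LinearMap.ker w = LinearMap.range (LinearMap.id - s ∘ₗ w) := by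
  apply le_antisymm
  · intro t ht
    exact ⟨t, by simp [LinearMap.mem_ker.1 ht]⟩
  · rintro _ ⟨t, rfl⟩
    simp [hs]

theorem apply_apply_eq_sub_of_id_sub_comp_eq {ψ : M →ₗ[R] M}
    (h : LinearMap.id - s ∘ₗ w = ψ) (t : M) : s (w t) = t - ψ t := by
  rw [← h]
  simp

theorem ker_le_ker_id_sub_of_le_range {ψ : M →ₗ[R] M} (hψ : ∀ t, ψ (ψ t) = ψ t)
    (hker : LinearMap.ker w ≤ LinearMap.range ψ) :
    LinearMap.ker w ≤ LinearMap.ker (LinearMap.id - ψ) := by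
  intro t ht
  obtain ⟨u, rfl⟩ := hker ht
  simp [hψ u]

variable (w) in
/-- The paper's `s_ψ`: `1 − ψ` factored through the surjection `w`. -/
def sectionOfProjection (hw : Function.Surjective w) (ψ : M →ₗ[R] M)
    (hψ : LinearMap.ker w ≤ LinearMap.ker (LinearMap.id - ψ)) : N →ₗ[R] M :=
  (LinearMap.ker w).liftQ (LinearMap.id - ψ) hψ ∘ₗ (w.quotKerEquivOfSurjective hw).symm

theorem sectionOfProjection_apply_apply (hw : Function.Surjective w) {ψ : M →ₗ[R] M}
    (hψ : LinearMap.ker w ≤ LinearMap.ker (LinearMap.id - ψ)) (t : M) :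
    sectionOfProjection w hw ψ hψ (w t) = t - ψ t := by
  have hmk : (w.quotKerEquivOfSurjective hw).symm (w t) = Submodule.Quotient.mk t := by
    rw [LinearEquiv.symm_apply_eq]
    rfl
  simp only [sectionOfProjection, LinearMap.comp_apply, LinearEquiv.coe_coe, hmk,
    Submodule.liftQ_apply, LinearMap.sub_apply, LinearMap.id_apply]

theorem sectionOfProjection_comp (hw : Function.Surjective w) {ψ : M →ₗ[R] M}
    (hψ : LinearMap.ker w ≤ LinearMap.ker (LinearMap.id - ψ)) :
    sectionOfProjection w hw ψ hψ ∘ₗ w = LinearMap.id - ψ :=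
  LinearMap.ext (sectionOfProjection_apply_apply hw hψ)

theorem apply_sectionOfProjection (hw : Function.Surjective w) {ψ : M →ₗ[R] M}
    (hψ : LinearMap.ker w ≤ LinearMap.ker (LinearMap.id - ψ))
    (hrange : LinearMap.range ψ ≤ LinearMap.ker w) (x : N) :
    w (sectionOfProjection w hw ψ hψ x) = x := by
  obtain ⟨t, rfl⟩ := hw x
  rw [sectionOfProjection_apply_apply, map_sub, LinearMap.mem_ker.1 (hrange ⟨t, rfl⟩),
    sub_zero]

end Splitting

theorem junkTwoTensors_subset_ker {B : Type} [Ring B] [Algebra ℂ B]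
    {Ω T Ω2 : Type} [AddCommGroup Ω] [Module ℂ Ω] [Module B Ω] [Module Bᵐᵒᵖ Ω]
    [AddCommGroup T] [Module ℂ T] [Module B T] [Module Bᵐᵒᵖ T] [AddCommGroup Ω2] [Module ℂ Ω2]
    {P : BalPair B Ω Ω T} {D : FODC B Ω} {wedge : T →ₗ[ℂ] Ω2} {d₁ : Ω →ₗ[ℂ] Ω2}
    (hd₁ : ∀ a b : B, d₁ (a • D.d b) = wedge (P.tp (D.d a) (D.d b))) :
    junkTwoTensors P D ⊆ LinearMap.ker wedge := by
  rintro _ ⟨n, a, b, -, hab, rfl⟩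
  rw [SetLike.mem_coe, LinearMap.mem_ker, map_sum]
  simp only [← hd₁, ← map_sum, hab, map_zero]

theorem statement10_general
    {B : Type} [Ring B] [Algebra ℂ B]
    {Ω T Ω2 : Type} [AddCommGroup Ω] [Module ℂ Ω] [Module B Ω] [Module Bᵐᵒᵖ Ω]
    [AddCommGroup T] [Module ℂ T] [Module B T] [Module Bᵐᵒᵖ T]
    [AddCommGroup Ω2] [Module ℂ Ω2] [Module B Ω2] [Module Bᵐᵒᵖ Ω2]
    (P : BalPair B Ω Ω T) (D : FODC B Ω)
    -- the wedge map Ω¹ ⊗_B Ω¹ → Ω² and the differential d : Ω¹ → Ω² of the calculus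
    (wedge : T →ₗ[ℂ] Ω2) (hwedge : IsBimoduleMap (B := B) wedge)
    (hwedge_surj : Function.Surjective wedge)
    (d₁ : Ω →ₗ[ℂ] Ω2)
    (hd₁ : ∀ a b : B, d₁ (a • D.d b) = wedge (P.tp (D.d a) (D.d b))) :
    -- (a) for every quasi-tame structure s, ψ_s = 1 − s∘∧ is a weak second order
    -- differential structure with Ker(∧) = Ran(ψ_s)
    (∀ s : Ω2 →ₗ[ℂ] T, IsBimoduleMap (B := B) s → (∀ x, wedge (s x) = x) →
      (IsBimoduleMap (B := B) ((LinearMap.id : T →ₗ[ℂ] T) - s ∘ₗ wedge) ∧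
       (∀ t, ((LinearMap.id : T →ₗ[ℂ] T) - s ∘ₗ wedge) (((LinearMap.id : T →ₗ[ℂ] T) - s ∘ₗ wedge) t) =
          ((LinearMap.id : T →ₗ[ℂ] T) - s ∘ₗ wedge) t) ∧
       junkTwoTensors P D ⊆ Set.range ((LinearMap.id : T →ₗ[ℂ] T) - s ∘ₗ wedge) ∧
       LinearMap.ker wedge = LinearMap.range ((LinearMap.id : T →ₗ[ℂ] T) - s ∘ₗ wedge))) ∧
    -- (b) conversely, every such ψ arises from a unique quasi-tame structure s
    (∀ ψ : T →ₗ[ℂ] T, IsBimoduleMap (B := B) ψ → (∀ t, ψ (ψ t) = ψ t) →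
      junkTwoTensors P D ⊆ Set.range ψ → LinearMap.ker wedge = LinearMap.range ψ →
      ∃! s : Ω2 →ₗ[ℂ] T, (IsBimoduleMap (B := B) s ∧ (∀ x, wedge (s x) = x)) ∧
        (LinearMap.id : T →ₗ[ℂ] T) - s ∘ₗ wedge = ψ) ∧
    -- (c) the inverse correspondence is ψ ↦ s_ψ, i.e. s∘∧ = 1 − ψ
    (∀ (ψ : T →ₗ[ℂ] T) (s : Ω2 →ₗ[ℂ] T),
      (LinearMap.id : T →ₗ[ℂ] T) - s ∘ₗ wedge = ψ → ∀ t, s (wedge t) = t - ψ t) := by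
  refine ⟨fun s hs hsec => ?_, fun ψ hψ hidem _ hker => ?_,
    fun ψ s h => apply_apply_eq_sub_of_id_sub_comp_eq h⟩
  · have hker := ker_eq_range_id_sub_comp hsec
    refine ⟨IsBimoduleMap.id.sub (hs.comp hwedge), id_sub_comp_idem hsec, ?_, hker⟩
    rw [← LinearMap.coe_range, ← hker]
    exact junkTwoTensors_subset_ker hd₁
  · have hfix := ker_le_ker_id_sub_of_le_range hidem hker.le
    have hcomp := sectionOfProjection_comp hwedge_surj hfix
    refine ⟨sectionOfProjection wedge hwedge_surj ψ hfix, ⟨⟨?_, ?_⟩, ?_⟩, ?_⟩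
    · exact (hcomp ▸ IsBimoduleMap.id.sub hψ).of_comp_of_surjective hwedge hwedge_surj
    · exact apply_sectionOfProjection hwedge_surj hfix hker.ge
    · rw [hcomp, sub_sub_cancel]
    · rintro s ⟨-, hs⟩
      rw [← LinearMap.cancel_right hwedge_surj, hcomp, ← hs, sub_sub_cancel]

/-- Let `(Ω•, ∧, d)` be a differential calculus with `Ω¹` finitely
generated projective as a left `B`-module.  Then `s ↦ ψ_s := 1 − s∘∧` is a bijective
correspondence between quasi-tame structures (bimodule maps `s : Ω² → Ω¹ ⊗_B Ω¹` with
`∧∘s = id`) and weak second order differential structures `(Ω¹, d, ψ)` with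
`Ker(∧) = Ran(ψ)`; the inverse sends `ψ` to `s_ψ`, the inverse of `∧` restricted to
`Ran(1 − ψ)` (so `s_ψ ∘ ∧ = 1 − ψ`). -/
theorem statement10
    {B : Type} [Ring B] [Algebra ℂ B]
    {Ω T Ω2 : Type} [AddCommGroup Ω] [Module ℂ Ω] [Module B Ω] [Module Bᵐᵒᵖ Ω]
    [AddCommGroup T] [Module ℂ T] [Module B T] [Module Bᵐᵒᵖ T]
    [AddCommGroup Ω2] [Module ℂ Ω2] [Module B Ω2] [Module Bᵐᵒᵖ Ω2]
    [Module.Finite B Ω] [Module.Projective B Ω]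
    (P : BalPair B Ω Ω T) (D : FODC B Ω)
    -- the wedge map Ω¹ ⊗_B Ω¹ → Ω² and the differential d : Ω¹ → Ω² of the calculus
    (wedge : T →ₗ[ℂ] Ω2) (hwedge : IsBimoduleMap (B := B) wedge)
    (hwedge_surj : Function.Surjective wedge)
    (d₁ : Ω →ₗ[ℂ] Ω2)
    (hd₁ : ∀ a b : B, d₁ (a • D.d b) = wedge (P.tp (D.d a) (D.d b))) :
    -- (a) for every quasi-tame structure s, ψ_s = 1 − s∘∧ is a weak second order
    -- differential structure with Ker(∧) = Ran(ψ_s)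
    (∀ s : Ω2 →ₗ[ℂ] T, IsBimoduleMap (B := B) s → (∀ x, wedge (s x) = x) →
      (IsBimoduleMap (B := B) ((LinearMap.id : T →ₗ[ℂ] T) - s ∘ₗ wedge) ∧
       (∀ t, ((LinearMap.id : T →ₗ[ℂ] T) - s ∘ₗ wedge) (((LinearMap.id : T →ₗ[ℂ] T) - s ∘ₗ wedge) t) =
          ((LinearMap.id : T →ₗ[ℂ] T) - s ∘ₗ wedge) t) ∧
       junkTwoTensors P D ⊆ Set.range ((LinearMap.id : T →ₗ[ℂ] T) - s ∘ₗ wedge) ∧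
       LinearMap.ker wedge = LinearMap.range ((LinearMap.id : T →ₗ[ℂ] T) - s ∘ₗ wedge))) ∧
    -- (b) conversely, every such ψ arises from a unique quasi-tame structure s
    (∀ ψ : T →ₗ[ℂ] T, IsBimoduleMap (B := B) ψ → (∀ t, ψ (ψ t) = ψ t) →
      junkTwoTensors P D ⊆ Set.range ψ → LinearMap.ker wedge = LinearMap.range ψ →
      ∃! s : Ω2 →ₗ[ℂ] T, (IsBimoduleMap (B := B) s ∧ (∀ x, wedge (s x) = x)) ∧
        (LinearMap.id : T →ₗ[ℂ] T) - s ∘ₗ wedge = ψ) ∧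
    -- (c) the inverse correspondence is ψ ↦ s_ψ, i.e. s∘∧ = 1 − ψ
    (∀ (ψ : T →ₗ[ℂ] T) (s : Ω2 →ₗ[ℂ] T),
      (LinearMap.id : T →ₗ[ℂ] T) - s ∘ₗ wedge = ψ → ∀ t, s (wedge t) = t - ψ t) :=
  statement10_general P D wedge hwedge hwedge_surj d₁ hd₁
end
end

section
/- Let (Ω•, ∧, d, s) be a quasi-tame differential calculus on B and ∇ a connection on Ω¹. Then ∇ is torsionless in the sense of Beggs–Majid (∧ ∘ ∇ = d) if and only if ∇ is torsionless in the sense of Mesland–Rennie for the weak second order differential structure (Ω¹, d, ψ_s) with ψ_s = 1 − s ∘ ∧, i.e. (1 − ψ_s)∇ = d_{ψ_s}. -/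
open MulOpposite

noncomputable section

/-! Since `∧ ∘ s = id`, the map `s` is injective and `1 − ψ_s = s ∘ ∧`; so both sides of the
Mesland–Rennie condition become `s ∘ ∧` of the two sides of the Beggs–Majid condition, evaluated
on the generators `Σᵢ aᵢ dbᵢ` of `Ω¹`. -/

section TorsionComparison

variable {B : Type} [Ring B] [Algebra ℂ B]
  {Ω T Ω2 : Type} [AddCommGroup Ω] [Module ℂ Ω] [Module B Ω] [Module Bᵐᵒᵖ Ω]
  [AddCommGroup T] [Module ℂ T] [Module B T] [Module Bᵐᵒᵖ T]
  [AddCommGroup Ω2] [Module ℂ Ω2]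

theorem FODC.forall_apply_eq_iff_forall_sum {M : Type} [AddCommGroup M] [Module ℂ M]
    (D : FODC B Ω) (f g : Ω →ₗ[ℂ] M) :
    (∀ ω, f ω = g ω) ↔
      ∀ (n : ℕ) (a b : Fin n → B), f (∑ i, a i • D.d (b i)) = g (∑ i, a i • D.d (b i)) := by
  refine ⟨fun h n a b => h _, fun h => LinearMap.congr_fun ?_⟩
  refine LinearMap.ext_on D.generates ?_
  rintro _ ⟨a, b, rfl⟩
  simpa using h 1 (fun _ => a) (fun _ => b)

theorem isTorsionFreeMR_id_sub_comp_iff (P : BalPair B Ω Ω T) (d : B →ₗ[ℂ] Ω)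
    {wedge : T →ₗ[ℂ] Ω2} {s : Ω2 →ₗ[ℂ] T} (hs : Function.LeftInverse wedge s)
    (cn : Ω →ₗ[ℂ] T) :
    IsTorsionFreeMR P d (LinearMap.id - s ∘ₗ wedge) cn ↔
      ∀ (n : ℕ) (a b : Fin n → B),
        wedge (cn (∑ i, a i • d (b i))) = wedge (∑ i, P.tp (d (a i)) (d (b i))) := by
  simp only [IsTorsionFreeMR, LinearMap.sub_apply, LinearMap.id_apply, LinearMap.comp_apply,
    sub_sub_cancel, hs.injective.eq_iff]

end TorsionComparison

theorem statement11_general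
    {B : Type} [Ring B] [Algebra ℂ B]
    {Ω T Ω2 : Type} [AddCommGroup Ω] [Module ℂ Ω] [Module B Ω] [Module Bᵐᵒᵖ Ω]
    [AddCommGroup T] [Module ℂ T] [Module B T] [Module Bᵐᵒᵖ T]
    [AddCommGroup Ω2] [Module ℂ Ω2]
    (P : BalPair B Ω Ω T) (D : FODC B Ω)
    -- the wedge map Ω¹ ⊗_B Ω¹ → Ω² and the differential d : Ω¹ → Ω² of the calculus
    (wedge : T →ₗ[ℂ] Ω2)
    (d₁ : Ω →ₗ[ℂ] Ω2)
    (hd₁ : ∀ a b : B, d₁ (a • D.d b) = wedge (P.tp (D.d a) (D.d b)))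
    -- the quasi-tame splitting s of the wedge map
    (s : Ω2 →ₗ[ℂ] T)
    (hs_split : ∀ x, wedge (s x) = x)
    -- ψ_s = 1 − s∘∧
    (ψs : T →ₗ[ℂ] T) (hψs : ψs = (LinearMap.id : T →ₗ[ℂ] T) - s ∘ₗ wedge)
    -- a connection ∇ on Ω¹
    (cn : Ω →ₗ[ℂ] T) :
    (∀ ω : Ω, wedge (cn ω) = d₁ ω) ↔ IsTorsionFreeMR P D.d ψs cn := by
  subst hψs
  rw [isTorsionFreeMR_id_sub_comp_iff P D.d hs_split]
  refine (D.forall_apply_eq_iff_forall_sum (wedge ∘ₗ cn) d₁).trans ?_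
  simp only [LinearMap.comp_apply, map_sum, hd₁]

/-- Let `(Ω•, ∧, d, s)` be a quasi-tame differential calculus and `∇`
a connection on `Ω¹`.  Then `∇` is torsionless in the sense of Beggs–Majid
(`∧ ∘ ∇ = d`) iff `∇` is torsionless in the sense of Mesland–Rennie for the weak second
order differential structure `(Ω¹, d, ψ_s)`, `ψ_s = 1 − s∘∧`, i.e.
`(1 − ψ_s)∇ = d_{ψ_s}`. -/
theorem statement11
    {B : Type} [Ring B] [Algebra ℂ B]
    {Ω T Ω2 : Type} [AddCommGroup Ω] [Module ℂ Ω] [Module B Ω] [Module Bᵐᵒᵖ Ω]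
    [AddCommGroup T] [Module ℂ T] [Module B T] [Module Bᵐᵒᵖ T]
    [AddCommGroup Ω2] [Module ℂ Ω2] [Module B Ω2] [Module Bᵐᵒᵖ Ω2]
    [Module.Finite B Ω] [Module.Projective B Ω]
    (P : BalPair B Ω Ω T) (D : FODC B Ω)
    -- the wedge map Ω¹ ⊗_B Ω¹ → Ω² and the differential d : Ω¹ → Ω² of the calculus
    (wedge : T →ₗ[ℂ] Ω2) (hwedge : IsBimoduleMap (B := B) wedge)
    (hwedge_surj : Function.Surjective wedge)
    (d₁ : Ω →ₗ[ℂ] Ω2)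
    (hd₁ : ∀ a b : B, d₁ (a • D.d b) = wedge (P.tp (D.d a) (D.d b)))
    -- the quasi-tame splitting s of the wedge map
    (s : Ω2 →ₗ[ℂ] T) (hs_bimod : IsBimoduleMap (B := B) s)
    (hs_split : ∀ x, wedge (s x) = x)
    -- ψ_s = 1 − s∘∧
    (ψs : T →ₗ[ℂ] T) (hψs : ψs = (LinearMap.id : T →ₗ[ℂ] T) - s ∘ₗ wedge)
    -- a connection ∇ on Ω¹
    (cn : Ω →ₗ[ℂ] T) (hconn : IsConnection P D.d cn) :
    (∀ ω : Ω, wedge (cn ω) = d₁ ω) ↔ IsTorsionFreeMR P D.d ψs cn :=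
  statement11_general P D wedge d₁ hd₁ s hs_split ψs hψs cn
end
end
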